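/- arXiv:math/9905081 — 5 statements merged into one kernel-verified Lean document; each statement's English description precedes it below -/
import Mathlib

section
/- Let R be a commutative ring, I a maximal ideal of R, and M an R-module. If I^k · M_I = 0 for some natural number k (where M_I denotes the localization of M at I), then the localization M_I is isomorphic to the I-adic completion of M (the inverse limit of M/I^n M). -/
open Submodule

section aux
variable {R : Type} [CommRing R] {I : Ideal R}

lemma aux_quot_killed {X : Type*} [AddCommGroup X] [Module R X] (J : Ideal R)
    (q : Submodule R X) (hq : J • ⊤ ≤ q) : (J • ⊤ : Submodule R (X ⧸ q)) = ⊥ := by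
  have h1 : (J • ⊤ : Submodule R (X ⧸ q)) = map q.mkQ (J • ⊤) := by
    rw [Submodule.map_smul'', Submodule.map_top, Submodule.range_mkQ]
  rw [h1, eq_bot_iff]
  rintro y hy
  obtain ⟨x, hx, rfl⟩ := Submodule.mem_map.mp hy
  simpa [Submodule.mkQ_apply, Submodule.Quotient.mk_eq_zero] using hq hx

lemma aux_smul_one {X : Type*} [AddCommGroup X] [Module R X] (hI : I.IsMaximal) {n : ℕ}
    (hX : (I ^ n • ⊤ : Submodule R X) = ⊥) {s : R} (hs : s ∈ I.primeCompl) :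
    ∃ t : R, ∀ x : X, (t * s) • x = x := by
  obtain ⟨t, a, haI, hta⟩ := hI.exists_inv hs
  refine ⟨(∑ j ∈ Finset.range n, a ^ j) * t, fun x => ?_⟩
  have h1 : (∑ j ∈ Finset.range n, a ^ j) * (a - 1) = a ^ n - 1 := geom_sum_mul a n
  have hw : ((∑ j ∈ Finset.range n, a ^ j) * t) * s = 1 - a ^ n := by
    linear_combination (∑ j ∈ Finset.range n, a ^ j) * hta - h1
  have ha : a ^ n • x = 0 := by
    have : a ^ n • x ∈ (I ^ n • ⊤ : Submodule R X) :=
      smul_mem_smul (Ideal.pow_mem_pow haI n) mem_top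
    rwa [hX, mem_bot] at this
  rw [hw, sub_smul, one_smul, ha, sub_zero]

end aux

section main

variable {R : Type} [CommRing R] (I : Ideal R) [hp : I.IsPrime]
variable (M : Type) [AddCommGroup M] [Module R M]

/-- The natural map `M ⧸ IⁿM → M_I ⧸ Iⁿ M_I`. -/
noncomputable def auxG (n : ℕ) :
    M ⧸ (I ^ n • ⊤ : Submodule R M) →ₗ[R]
      (LocalizedModule I.primeCompl M) ⧸
        (I ^ n • ⊤ : Submodule R (LocalizedModule I.primeCompl M)) :=
  mapQ _ _ (LocalizedModule.mkLinearMap I.primeCompl M) (by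
    rw [← map_le_iff_le_comap, Submodule.map_smul'', Submodule.map_top]
    exact smul_mono le_rfl le_top)

lemma auxG_mk (n : ℕ) (m : M) :
    auxG I M n (Submodule.Quotient.mk m) =
      Submodule.Quotient.mk (LocalizedModule.mkLinearMap I.primeCompl M m) :=
  rfl

lemma auxG_comm {m n : ℕ} (hmn : m ≤ n) (y : M ⧸ (I ^ n • ⊤ : Submodule R M)) :
    auxG I M m (AdicCompletion.transitionMap I M hmn y) =
      AdicCompletion.transitionMap I (LocalizedModule I.primeCompl M) hmn (auxG I M n y) := by
  obtain ⟨z, rfl⟩ := Submodule.Quotient.mk_surjective _ y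
  rfl

lemma aux_cancel (m : M) (s : I.primeCompl) :
    (s : R) • LocalizedModule.mk m s = LocalizedModule.mkLinearMap I.primeCompl M m := by
  rw [LocalizedModule.smul'_mk, ← Submonoid.smul_def, LocalizedModule.mk_cancel,
    LocalizedModule.mkLinearMap_apply]

lemma auxG_surjective (hI : I.IsMaximal) (n : ℕ) : Function.Surjective (auxG I M n) := by
  intro y
  obtain ⟨z, rfl⟩ := Submodule.Quotient.mk_surjective _ y
  induction z using LocalizedModule.induction_on with
  | h m s =>
    obtain ⟨t, ht⟩ := aux_smul_one (X := (LocalizedModule I.primeCompl M) ⧸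
        (I ^ n • ⊤ : Submodule R (LocalizedModule I.primeCompl M)))
      hI (aux_quot_killed _ _ le_rfl) s.2
    refine ⟨t • Submodule.Quotient.mk m, ?_⟩
    rw [map_smul, auxG_mk, ← aux_cancel, Submodule.Quotient.mk_smul, smul_smul]
    exact ht _

lemma aux_mem_smul_top (n : ℕ) (y : LocalizedModule I.primeCompl M)
    (hy : y ∈ (I ^ n • ⊤ : Submodule R (LocalizedModule I.primeCompl M))) :
    ∃ s : I.primeCompl, ∃ m' ∈ (I ^ n • ⊤ : Submodule R M),
      (s : R) • y = LocalizedModule.mkLinearMap I.primeCompl M m' := by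
  refine Submodule.smul_induction_on hy ?_ ?_
  · intro r hr z _
    induction z using LocalizedModule.induction_on with
    | h m s =>
      refine ⟨s, r • m, smul_mem_smul hr mem_top, ?_⟩
      rw [smul_comm, aux_cancel, ← map_smul]
  · rintro y1 y2 ⟨s1, m1, hm1, h1⟩ ⟨s2, m2, hm2, h2⟩
    refine ⟨s1 * s2, (s2 : R) • m1 + (s1 : R) • m2,
      add_mem (Submodule.smul_mem _ _ hm1) (Submodule.smul_mem _ _ hm2), ?_⟩
    have hs : ((s1 : R) * s2) • (y1 + y2) =
        (s2 : R) • ((s1 : R) • y1) + (s1 : R) • ((s2 : R) • y2) := by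
      rw [smul_add]
      congr 1
      · rw [← mul_smul, mul_comm, mul_smul]
      · rw [← mul_smul]
    rw [Submonoid.coe_mul, hs, h1, h2, ← map_smul, ← map_smul, ← map_add]

lemma auxG_injective (hI : I.IsMaximal) (n : ℕ) : Function.Injective (auxG I M n) := by
  rw [injective_iff_map_eq_zero]
  intro x hx
  obtain ⟨m, rfl⟩ := Submodule.Quotient.mk_surjective _ x
  rw [auxG_mk, Submodule.Quotient.mk_eq_zero] at hx
  obtain ⟨s, m', hm', hsm⟩ := aux_mem_smul_top I M n _ hx
  rw [← map_smul] at hsm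
  obtain ⟨c, hc⟩ := IsLocalizedModule.exists_of_eq (S := I.primeCompl)
    (f := LocalizedModule.mkLinearMap I.primeCompl M) hsm
  have hmem : ((c : R) * s) • m ∈ (I ^ n • ⊤ : Submodule R M) := by
    simp only [Submonoid.smul_def] at hc
    rw [mul_smul, hc]
    exact Submodule.smul_mem _ _ hm'
  obtain ⟨t, ht⟩ := aux_smul_one (X := M ⧸ (I ^ n • ⊤ : Submodule R M))
    hI (aux_quot_killed _ _ le_rfl) (c * s).2
  have h0 : ((c * s : I.primeCompl) : R) • (Submodule.Quotient.mk m :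
      M ⧸ (I ^ n • ⊤ : Submodule R M)) = 0 := by
    rw [← Submodule.Quotient.mk_smul, Submodule.Quotient.mk_eq_zero]
    simpa using hmem
  calc Submodule.Quotient.mk m = (t * (c * s : I.primeCompl)) •
        (Submodule.Quotient.mk m : M ⧸ (I ^ n • ⊤ : Submodule R M)) := (ht _).symm
    _ = t • (((c * s : I.primeCompl) : R) • Submodule.Quotient.mk m) := by rw [mul_smul]
    _ = 0 := by rw [h0, smul_zero]

end main

/-- If `I` is a maximal ideal of a commutative ring `R`, `M` an `R`-module,
and `I^k` kills the localization `M_I`, then `M_I` is isomorphic to the `I`-adic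
completion of `M`. -/
theorem stmt0 {R : Type} [CommRing R] (I : Ideal R) (hI : I.IsMaximal)
    (M : Type) [AddCommGroup M] [Module R M] (k : ℕ)
    (h : I ^ k • (⊤ : Submodule R (LocalizedModule (@Ideal.primeCompl _ _ I hI.isPrime) M)) = ⊥) :
    Nonempty (LocalizedModule (@Ideal.primeCompl _ _ I hI.isPrime) M ≃ₗ[R] AdicCompletion I M) := by
  haveI := hI.isPrime
  set N := LocalizedModule I.primeCompl M with hN
  let e : ∀ n, (M ⧸ (I ^ n • ⊤ : Submodule R M)) ≃ₗ[R] (N ⧸ (I ^ n • ⊤ : Submodule R N)) :=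
    fun n => LinearEquiv.ofBijective (auxG I M n)
      ⟨auxG_injective I M hI n, auxG_surjective I M hI n⟩
  have hcomm : ∀ {m n : ℕ} (hmn : m ≤ n) (y : M ⧸ (I ^ n • ⊤ : Submodule R M)),
      auxG I M m (AdicCompletion.transitionMap I M hmn y) =
        AdicCompletion.transitionMap I N hmn (auxG I M n y) := fun hmn y => auxG_comm I M hmn y
  let Φ : N →ₗ[R] AdicCompletion I M :=
    { toFun := fun x => ⟨fun n => (e n).symm (Submodule.Quotient.mk x), by
        intro m n hmn
        apply (e m).injective
        rw [(e m).apply_symm_apply]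
        have h1 : (e m) (AdicCompletion.transitionMap I M hmn
            ((e n).symm (Submodule.Quotient.mk x))) =
            auxG I M m (AdicCompletion.transitionMap I M hmn
              ((e n).symm (Submodule.Quotient.mk x))) := rfl
        rw [h1, hcomm hmn]
        have h2 : auxG I M n ((e n).symm (Submodule.Quotient.mk x)) =
            (e n) ((e n).symm (Submodule.Quotient.mk x)) := rfl
        rw [h2, (e n).apply_symm_apply]; rfl⟩
      map_add' := fun x y => Subtype.ext <| funext fun n => by
        show (e n).symm (Submodule.Quotient.mk (x + y)) =
          (e n).symm (Submodule.Quotient.mk x) + (e n).symm (Submodule.Quotient.mk y)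
        rw [← map_add, ← Submodule.Quotient.mk_add]
      map_smul' := fun r x => Subtype.ext <| funext fun n => by
        show (e n).symm (Submodule.Quotient.mk (r • x)) =
          r • (e n).symm (Submodule.Quotient.mk x)
        rw [← map_smul, ← Submodule.Quotient.mk_smul] }
  have hΦval : ∀ (x : N) (n : ℕ), (Φ x).val n = (e n).symm (Submodule.Quotient.mk x) :=
    fun x n => rfl
  have hbot : ∀ m, k ≤ m → (I ^ m • ⊤ : Submodule R N) = ⊥ := by
    intro m hm
    have h2 : (I ^ m • ⊤ : Submodule R N) ≤ I ^ k • ⊤ :=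
      smul_mono (Ideal.pow_le_pow_right hm) le_rfl
    rw [h] at h2
    exact le_bot_iff.mp h2
  have hmk : ∀ (m : ℕ) (hm : k ≤ m) (y : N ⧸ (I ^ m • ⊤ : Submodule R N)),
      Submodule.Quotient.mk (Submodule.quotEquivOfEqBot _ (hbot m hm) y) = y := by
    intro m hm y
    obtain ⟨w, rfl⟩ := Submodule.Quotient.mk_surjective _ y
    rw [Submodule.quotEquivOfEqBot_apply_mk]
  have hinjk : ∀ a b : N,
      (Submodule.Quotient.mk a : N ⧸ (I ^ k • ⊤ : Submodule R N)) = Submodule.Quotient.mk b →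
        a = b := by
    intro a b hab
    have h2 := (Submodule.Quotient.eq _).mp hab
    rw [h, mem_bot, sub_eq_zero] at h2
    exact h2
  have hinj : Function.Injective Φ := by
    rw [injective_iff_map_eq_zero]
    intro x hx
    have h1 : (e k).symm (Submodule.Quotient.mk x) = 0 := by
      rw [← hΦval x k, hx]; rfl
    have h2 : (Submodule.Quotient.mk x : N ⧸ (I ^ k • ⊤ : Submodule R N)) = 0 := by
      apply (e k).symm.injective
      rw [h1, map_zero]
    rw [Submodule.Quotient.mk_eq_zero, h, mem_bot] at h2
    exact h2
  have hsurj : Function.Surjective Φ := by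
    intro c
    set x := Submodule.quotEquivOfEqBot _ (hbot k le_rfl) (auxG I M k (c.val k)) with hx
    have claim : ∀ n, (Submodule.Quotient.mk x : N ⧸ (I ^ n • ⊤ : Submodule R N)) =
        auxG I M n (c.val n) := by
      intro n
      set m := max k n with hm
      set z := Submodule.quotEquivOfEqBot _ (hbot m (le_max_left k n))
        (auxG I M m (c.val m)) with hzdef
      have hz : (Submodule.Quotient.mk z : N ⧸ (I ^ m • ⊤ : Submodule R N)) =
          auxG I M m (c.val m) := hmk m (le_max_left k n) _
      have hzx : z = x := by
        apply hinjk
        calc (Submodule.Quotient.mk z : N ⧸ (I ^ k • ⊤ : Submodule R N))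
            = AdicCompletion.transitionMap I N (le_max_left k n)
              (Submodule.Quotient.mk z) := rfl
          _ = AdicCompletion.transitionMap I N (le_max_left k n) (auxG I M m (c.val m)) := by
              rw [hz]
          _ = auxG I M k (AdicCompletion.transitionMap I M (le_max_left k n) (c.val m)) :=
              (hcomm _ _).symm
          _ = auxG I M k (c.val k) := by rw [c.property (le_max_left k n)]
          _ = Submodule.Quotient.mk x := (hmk k le_rfl _).symm
      calc (Submodule.Quotient.mk x : N ⧸ (I ^ n • ⊤ : Submodule R N))
          = AdicCompletion.transitionMap I N (le_max_right k n)
            (Submodule.Quotient.mk (p := (I ^ m • ⊤ : Submodule R N)) x) :=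
            rfl
        _ = AdicCompletion.transitionMap I N (le_max_right k n) (auxG I M m (c.val m)) := by
            rw [← hzx, hz]
        _ = auxG I M n (AdicCompletion.transitionMap I M (le_max_right k n) (c.val m)) :=
            (hcomm _ _).symm
        _ = auxG I M n (c.val n) := by rw [c.property (le_max_right k n)]
    refine ⟨x, ?_⟩
    apply Subtype.ext
    funext n
    show (e n).symm (Submodule.Quotient.mk x) = c.val n
    rw [claim n]
    exact (e n).symm_apply_apply (c.val n)
  exact ⟨LinearEquiv.ofBijective Φ ⟨hinj, hsurj⟩⟩
end

section
/- Let R be a commutative ring and M an R-module annihilated by an ideal J such that R/J is a product of finitely many local rings via the Chinese Remainder Theorem: if J = Q₁ ∩ ... ∩ Q_r where the Qᵢ are Pᵢ-primary for distinct maximal ideals Pᵢ, then M ≅ ∏ᵢ M_{Pᵢ}, the product of the localizations of M at the Pᵢ. -/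
/-- if `M` is killed by `J = Q₁ ∩ … ∩ Q_r` with `Qᵢ` being `Pᵢ`-primary for
pairwise distinct maximal ideals `Pᵢ`, then `M` is isomorphic to the product of its
localizations at the `Pᵢ`. -/
theorem stmt4 {R : Type} [CommRing R] (M : Type) [AddCommGroup M] [Module R M]
    (r : ℕ) (Q P : Fin r → Ideal R)
    (hP : ∀ i, (P i).IsMaximal)
    (hprimary : ∀ i, (Q i).IsPrimary)
    (hrad : ∀ i, (Q i).radical = P i)
    (hdist : Function.Injective P)
    (hann : ∀ m : M, ∀ x ∈ (⨅ i, Q i : Ideal R), x • m = 0) :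
    Nonempty (M ≃ₗ[R]
      ∀ i : Fin r, LocalizedModule (@Ideal.primeCompl _ _ (P i) (hP i).isPrime) M) := by
  classical
  have hQP : ∀ i, Q i ≤ P i := fun i => (hrad i) ▸ Ideal.le_radical
  have hcop : ∀ i j, i ≠ j → IsCoprime (Q i) (Q j) := by
    intro i j hij
    rw [Ideal.isCoprime_iff_sup_eq, ← Ideal.radical_eq_top]
    apply top_unique
    calc (⊤ : Ideal R) = P i ⊔ P j :=
          ((hP i).coprime_of_ne (hP j) (fun h => hij (hdist h))).symm
      _ = (Q i).radical ⊔ (Q j).radical := by rw [hrad i, hrad j]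
      _ ≤ (Q i ⊔ Q j).radical :=
          sup_le (Ideal.radical_mono le_sup_left) (Ideal.radical_mono le_sup_right)
  have key : ∀ i, ∃ e : R, e - 1 ∈ Q i ∧ ∀ j, j ≠ i → e ∈ Q j := by
    intro i
    have hI' : ∀ j ∈ ({i} : Finset (Fin r))ᶜ, IsCoprime (Q i) (Q j) := by
      intro j hj
      exact hcop i j (by simpa [eq_comm] using hj)
    rcases Ideal.isCoprime_iff_exists.mp (Ideal.isCoprime_biInf hI') with ⟨u, hu, v, hv, huv⟩
    refine ⟨v, ?_, ?_⟩
    · have : v - 1 = -u := by linear_combination huv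
      rw [this]; exact neg_mem hu
    · intro j hj
      simp only [Ideal.mem_iInf, Finset.mem_compl, Finset.mem_singleton] at hv
      exact hv j hj
  choose e he1 he2 using key
  have hePnot : ∀ i, e i ∉ P i := by
    intro i hei
    have h1 : (1 : R) ∈ P i := by simpa using sub_mem hei (hQP i (he1 i))
    exact (hP i).ne_top (Ideal.eq_top_of_isUnit_mem _ h1 isUnit_one)
  have hts : ∀ i (s : R), s ∉ P i → ∃ t : R, t * s - 1 ∈ Q i := by
    intro i s hs
    obtain ⟨c, p, hp, hcs⟩ := (hP i).exists_inv hs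
    have hpQ : p ∈ (Q i).radical := (hrad i).symm ▸ hp
    obtain ⟨n, hn⟩ := hpQ
    refine ⟨c * (∑ k ∈ Finset.range n, p ^ k), ?_⟩
    have hkey : (∑ k ∈ Finset.range n, p ^ k) * (p - 1) = p ^ n - 1 := geom_sum_mul p n
    have h2 : c * (∑ k ∈ Finset.range n, p ^ k) * s - 1 = -(p ^ n) := by
      linear_combination (∑ k ∈ Finset.range n, p ^ k) * hcs - hkey
    rw [h2]; exact neg_mem hn
  set L := fun i : Fin r =>
    LocalizedModule (@Ideal.primeCompl _ _ (P i) (hP i).isPrime) M with hL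
  let g : M →ₗ[R] ∀ i, L i :=
    LinearMap.pi (fun i =>
      LocalizedModule.mkLinearMap (@Ideal.primeCompl _ _ (P i) (hP i).isPrime) M)
  have hg : ∀ (m : M) (i : Fin r), g m i = LocalizedModule.mk m 1 := fun m i => rfl
  -- kernel is trivial
  have hker : ∀ x : M, (∀ i, (LocalizedModule.mk x 1 : L i) = 0) → x = 0 := by
    intro x h0
    have hsx : ∀ i, ∃ s : R, s ∉ P i ∧ s • x = 0 := by
      intro i
      have h1 : (LocalizedModule.mk x 1 : L i) = LocalizedModule.mk 0 1 := by
        rw [h0 i, LocalizedModule.zero_mk]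
      rw [LocalizedModule.mk_eq] at h1
      obtain ⟨u, hu⟩ := h1
      refine ⟨(u : R), u.2, ?_⟩
      simpa [Submonoid.smul_def, smul_smul] using hu
    choose s hsP hs0 using hsx
    choose t ht using fun i => hts i (s i) (hsP i)
    have hc : (1 : R) - ∑ i, e i * t i * s i ∈ ⨅ i, Q i := by
      rw [Ideal.mem_iInf]
      intro k
      rw [← Finset.sum_erase_add _ _ (Finset.mem_univ k)]
      have h1 : (1:R) - (∑ i ∈ Finset.univ.erase k, e i * t i * s i + e k * t k * s k)
          = (1 - e k * t k * s k) - ∑ i ∈ Finset.univ.erase k, e i * t i * s i := by ring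
      rw [h1]
      refine sub_mem ?_ (Ideal.sum_mem _ ?_)
      · have h2 : (1:R) - e k * t k * s k
            = -((e k - 1) * (t k * s k)) - (t k * s k - 1) := by ring
        rw [h2]
        exact sub_mem (neg_mem (Ideal.mul_mem_right _ _ (he1 k))) (ht k)
      · intro i hi
        exact Ideal.mul_mem_right _ _ (Ideal.mul_mem_right _ _
          (he2 i k (Finset.ne_of_mem_erase hi).symm))
    calc x = (1 : R) • x := (one_smul R x).symm
      _ = ((1 - ∑ i, e i * t i * s i) + ∑ i, e i * t i * s i) • x := by ring_nf
      _ = (1 - ∑ i, e i * t i * s i) • x + (∑ i, e i * t i * s i) • x := add_smul _ _ _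
      _ = 0 := by
          rw [hann x _ hc, Finset.sum_smul, zero_add]
          apply Finset.sum_eq_zero
          intro i _
          have : (e i * t i * s i) • x = (e i * t i) • (s i • x) := by
            rw [smul_smul]
          rw [this, hs0 i, smul_zero]
  have hinj : Function.Injective g := by
    intro m m' hmm'
    have h0 : g (m - m') = 0 := by rw [map_sub, hmm', sub_self]
    have h1 : ∀ i, (LocalizedModule.mk (m - m') 1 : L i) = 0 := by
      intro i
      rw [← hg]
      exact congrFun h0 i
    exact sub_eq_zero.mp (hker _ h1)
  have hsurj : Function.Surjective g := by
    intro x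
    have hrep : ∀ i, ∃ p : M × (@Ideal.primeCompl _ _ (P i) (hP i).isPrime),
        (LocalizedModule.mk p.1 p.2 : L i) = x i := fun i =>
      LocalizedModule.induction_on (fun m s => ⟨⟨m, s⟩, rfl⟩) (x i)
    choose p hp using hrep
    have hsP : ∀ i, ((p i).2 : R) ∉ P i := fun i => (p i).2.2
    choose t ht using fun i => hts i ((p i).2 : R) (hsP i)
    refine ⟨∑ j, (e j * t j) • (p j).1, ?_⟩
    funext i
    rw [hg, ← hp i, LocalizedModule.mk_eq]
    refine ⟨⟨e i, hePnot i⟩, ?_⟩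
    simp only [Submonoid.smul_def, OneMemClass.coe_one, one_smul, smul_smul]
    rw [Finset.smul_sum]
    have hmain : ∀ j ∈ Finset.univ, j ≠ i →
        (e i * ((p i).2 : R)) • ((e j * t j) • (p j).1) = 0 := by
      intro j _ hji
      rw [smul_smul]
      apply hann
      rw [Ideal.mem_iInf]
      intro k
      rcases eq_or_ne k i with rfl | hk
      · have h3 : e k * ((p k).2 : R) * (e j * t j)
            = (e k * ((p k).2 : R) * t j) * e j := by ring
        rw [h3]
        exact Ideal.mul_mem_left _ _ (he2 j k (Ne.symm hji))
      · have h3 : e i * ((p i).2 : R) * (e j * t j)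
            = (((p i).2 : R) * (e j * t j)) * e i := by ring
        rw [h3]
        exact Ideal.mul_mem_left _ _ (he2 i k hk)
    rw [Finset.sum_eq_single_of_mem i (Finset.mem_univ i) hmain, smul_smul]
    have hd : e i * ((p i).2 : R) * (e i * t i) - e i ∈ ⨅ k, Q k := by
      rw [Ideal.mem_iInf]
      intro k
      rcases eq_or_ne k i with rfl | hk
      · have h3 : e k * ((p k).2 : R) * (e k * t k) - e k
            = e k * ((e k - 1) * (((p k).2 : R) * t k)) + e k * (t k * ((p k).2 : R) - 1) := by
          ring
        rw [h3]
        exact add_mem (Ideal.mul_mem_left _ _ (Ideal.mul_mem_right _ _ (he1 k)))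
          (Ideal.mul_mem_left _ _ (ht k))
      · have h3 : e i * ((p i).2 : R) * (e i * t i) - e i
            = (((p i).2 : R) * (e i * t i) - 1) * e i := by ring
        rw [h3]
        exact Ideal.mul_mem_left _ _ (he2 i k hk)
    have h4 : (e i * ((p i).2 : R) * (e i * t i)) • (p i).1 - e i • (p i).1
        = (e i * ((p i).2 : R) * (e i * t i) - e i) • (p i).1 := (sub_smul _ _ _).symm
    have h5 := hann ((p i).1) _ hd
    rw [← h4] at h5
    exact sub_eq_zero.mp h5
  exact ⟨LinearEquiv.ofBijective g ⟨hinj, hsurj⟩⟩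
end

section
/- Let φ : R → S be a ring homomorphism of commutative rings, and let I ⊆ R and I_S ⊆ S be ideals with φ(I) ⊆ I_S and φ⁻¹(I_S) = I, where I_S is a maximal ideal of S, and suppose there exists d with I_S^d ⊆ φ(I)·S. Let M be an S-module, viewed as an R-module via φ. If for every x ∈ M and a ∈ I^k there exists b ∈ R \ I with a b x = 0, then for every x ∈ M and a' ∈ I_S^{dk} there exists b' ∈ S \ I_S with a' b' x = 0; equivalently, I^k M_I = 0 implies I_S^{dk} M_{I_S} = 0, where the localizations are of M as an R-module at I and as an S-module at I_S. -/
/-- Step 3 of Prop. 5.3: `φ : R → S` with `φ(I) ⊆ I_S`, `φ⁻¹(I_S) = I`,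
`I_S` maximal and `I_S^d ⊆ φ(I)·S`.  If the localization of the `S`-module `M` at `I`
(as an `R`-module via `φ`) is killed by `I^k` — expressed elementwise: for every `x ∈ M`
and `a ∈ I^k` there is `b ∉ I` with `a·b·x = 0` — then the localization of `M` at `I_S`
is killed by `I_S^{dk}`: for every `x ∈ M` and `a' ∈ I_S^{dk}` there is `b' ∉ I_S` with
`a'·b'·x = 0`. -/
theorem stmt11 {R S : Type} [CommRing R] [CommRing S] (φ : R →+* S)
    (I : Ideal R) (I_S : Ideal S) (hmax : I_S.IsMaximal)
    (hsub : ∀ a ∈ I, φ a ∈ I_S)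
    (hpre : I_S.comap φ = I)
    (d k : ℕ) (hd : 1 ≤ d)
    (hds : I_S ^ d ≤ Ideal.map φ I)
    (M : Type) [AddCommGroup M] [Module S M]
    (h : ∀ x : M, ∀ a ∈ I ^ k, ∃ b : R, b ∉ I ∧ (φ a * φ b) • x = 0) :
    ∀ x : M, ∀ a' ∈ I_S ^ (d * k), ∃ b' : S, b' ∉ I_S ∧ (a' * b') • x = 0 := by
  intro x a' ha'
  have hprime : I_S.IsPrime := hmax.isPrime
  have hmem : a' ∈ Ideal.map φ (I ^ k) := by
    have : I_S ^ (d * k) ≤ Ideal.map φ (I ^ k) := by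
      rw [pow_mul, Ideal.map_pow]
      exact Ideal.pow_right_mono hds k
    exact this ha'
  clear ha'
  rw [Ideal.map, Ideal.span] at hmem
  induction hmem using Submodule.span_induction with
  | mem s hs =>
    obtain ⟨a, ha, rfl⟩ := hs
    obtain ⟨b, hb, hbx⟩ := h x a ha
    exact ⟨φ b, fun hc => hb (by rw [← hpre]; exact hc), hbx⟩
  | zero =>
    exact ⟨1, fun hc => hmax.ne_top (Ideal.eq_top_of_isUnit_mem _ hc isUnit_one),
      by simp⟩
  | add a₁ a₂ _ _ ih1 ih2 =>
    obtain ⟨b₁, hb₁, h1⟩ := ih1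
    obtain ⟨b₂, hb₂, h2⟩ := ih2
    refine ⟨b₁ * b₂, fun hc => ?_, ?_⟩
    · rcases hprime.mem_or_mem hc with hc | hc
      · exact hb₁ hc
      · exact hb₂ hc
    · have : (a₁ + a₂) * (b₁ * b₂) = b₂ * (a₁ * b₁) + b₁ * (a₂ * b₂) := by ring
      rw [this, add_smul, mul_smul b₂ (a₁*b₁), mul_smul b₁ (a₂*b₂), h1, h2, smul_zero, smul_zero, add_zero]
  | smul c a _ ih =>
    obtain ⟨b, hb, hbx⟩ := ih
    refine ⟨b, hb, ?_⟩
    have : c • a * b = c * (a * b) := by simp [smul_eq_mul]; ring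
    rw [this, mul_smul, hbx, smul_zero]
end

section
/- Let n be a positive integer, char of the base field arbitrary, and consider R(T) = ℤ[t₁^{±1},...,tₙ^{±1}] with augmentation ideals I_T = (t₁−1,...,tₙ−1) and I_G = I ∩ R(G) pulled back from the symmetric subring S = ℤ[e₁,...,eₙ,eₙ⁻¹] with augmentation ideal I_S = ker(S → ℤ, eᵢ ↦ C(n,i)). Then the I_S-adic and I_T-adic topologies on R(T) coincide; i.e., for every k there is m with I_T^m ⊆ I_S^k R(T), and conversely I_S^k R(T) ⊆ I_T^k. -/
set_option synthInstance.maxHeartbeats 1000000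
set_option maxHeartbeats 1600000

noncomputable section

/-- The Laurent polynomial ring `R(T) = ℤ[t₁^{±1},…,tₙ^{±1}]`. -/
abbrev LaurentN (n : ℕ) : Type := AddMonoidAlgebra ℤ (Fin n → ℤ)

/-- The variable `tᵢ`. -/
def tvar {n : ℕ} (i : Fin n) : LaurentN n :=
  AddMonoidAlgebra.single (Pi.single i (1 : ℤ)) (1 : ℤ)

/-- The `k`-th elementary symmetric polynomial `e_k` in `t₁,…,tₙ`. -/
def esymL (n k : ℕ) : LaurentN n :=
  MvPolynomial.aeval tvar (MvPolynomial.esymm (Fin n) ℤ k)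

/-- `eₙ⁻¹ = (t₁⋯tₙ)⁻¹`. -/
def eInv (n : ℕ) : LaurentN n :=
  AddMonoidAlgebra.single (fun _ => (-1 : ℤ)) (1 : ℤ)

/-- The symmetric subring `S = ℤ[e₁,…,eₙ,eₙ⁻¹]`. -/
def symS (n : ℕ) : Subalgebra ℤ (LaurentN n) :=
  Algebra.adjoin ℤ (insert (eInv n) (Set.range fun i : Fin n => esymL n (i.val + 1)))

/-- The augmentation `R(T) → ℤ`, `tᵢ ↦ 1`. -/
def aug (n : ℕ) : LaurentN n →ₐ[ℤ] ℤ :=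
  (AddMonoidAlgebra.lift ℤ ℤ (Fin n → ℤ)) 1

/-- The augmentation ideal `I_T = (t₁−1,…,tₙ−1)` of `R(T)`. -/
def IT (n : ℕ) : Ideal (LaurentN n) :=
  Ideal.span (Set.range fun i : Fin n => tvar i - 1)

/-- The augmentation ideal `I_S = ker(S → ℤ)` of `S`. -/
def IS (n : ℕ) : Ideal (symS n) :=
  RingHom.ker ((aug n).comp (symS n).val)

lemma aug_single (n : ℕ) (a : Fin n → ℤ) (c : ℤ) :
    aug n (AddMonoidAlgebra.single a c) = c := by
  simp [aug, AddMonoidAlgebra.lift_single]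

lemma aug_tvar (n : ℕ) (i : Fin n) : aug n (tvar i) = 1 := aug_single n _ 1

lemma esymL_eq (n r : ℕ) :
    esymL n r = ∑ A ∈ Finset.powersetCard r Finset.univ, ∏ i ∈ A, tvar i := by
  simp [esymL, MvPolynomial.esymm, map_sum, map_prod, MvPolynomial.aeval_X]

lemma aug_esymL (n r : ℕ) : aug n (esymL n r) = (n.choose r : ℤ) := by
  rw [esymL_eq, map_sum]
  simp only [map_prod, aug_tvar, Finset.prod_const_one]
  simp [Finset.card_powersetCard]

lemma esymL_zero (n : ℕ) : esymL n 0 = 1 := by simp [esymL]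

lemma esymL_mem (n r : ℕ) (h1 : 1 ≤ r) (h2 : r ≤ n) : esymL n r ∈ symS n := by
  refine Algebra.subset_adjoin (Set.mem_insert_iff.mpr (Or.inr ⟨⟨r - 1, by omega⟩, ?_⟩))
  show esymL n (r - 1 + 1) = esymL n r
  congr 1
  omega

lemma cmem (n r : ℕ) (h1 : 1 ≤ r) (h2 : r ≤ n) :
    ((n.choose r : ℤ) : LaurentN n) - esymL n r ∈ Ideal.map (symS n).val (IS n) := by
  have hm : ((n.choose r : ℤ) : LaurentN n) - esymL n r ∈ symS n :=
    sub_mem (intCast_mem _ _) (esymL_mem n r h1 h2)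
  have hk : (⟨_, hm⟩ : symS n) ∈ IS n := by
    simp only [IS, RingHom.mem_ker, AlgHom.comp_apply, Subalgebra.coe_val]
    show aug n (((n.choose r : ℤ) : LaurentN n) - esymL n r) = 0
    rw [map_sub, aug_esymL, map_intCast]
    push_cast
    ring
  exact Ideal.mem_map_of_mem _ hk

lemma vieta (n : ℕ) (i : Fin n) :
    ∑ r ∈ Finset.range (n + 1),
      (-1 : LaurentN n) ^ r * esymL n r * (tvar i) ^ (n - r) = 0 := by
  classical
  set s : Multiset (LaurentN n) := Finset.univ.val.map tvar with hs
  have hcard : Multiset.card s = n := by simp [hs]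
  have hV := congrArg (Polynomial.eval (tvar i)) (Multiset.prod_X_sub_X_eq_sum_esymm s)
  have hL : Polynomial.eval (tvar i) (s.map fun t => Polynomial.X - Polynomial.C t).prod = 0 := by
    rw [Polynomial.eval_multiset_prod]
    apply Multiset.prod_eq_zero
    rw [Multiset.map_map]
    refine Multiset.mem_map.mpr ⟨tvar i, ?_, by simp⟩
    exact Multiset.mem_map.mpr ⟨i, Finset.mem_univ_val i, rfl⟩
  rw [hL] at hV
  have hR : ∀ j, s.esymm j = esymL n j := fun j =>
    (MvPolynomial.aeval_esymm_eq_multiset_esymm (Fin n) ℤ j tvar).symm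
  rw [Polynomial.eval_finset_sum] at hV
  refine Eq.trans ?_ hV.symm
  rw [hcard]
  refine Finset.sum_congr rfl fun j _ => ?_
  rw [hR j]
  simp [mul_assoc]

lemma binom (n : ℕ) (i : Fin n) :
    (tvar i - 1) ^ n = ∑ r ∈ Finset.range (n + 1),
      (-1 : LaurentN n) ^ r * ((n.choose r : ℤ) : LaurentN n) * (tvar i) ^ (n - r) := by
  rw [sub_pow, ← Finset.sum_range_reflect]
  refine Finset.sum_congr rfl fun j hj => ?_
  have hjn : j ≤ n := by
    have := Finset.mem_range.mp hj; omega
  have hsign : (-1 : LaurentN n) ^ (n - j + n) = (-1) ^ j := by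
    have h2 : n - j + n = j + 2 * (n - j) := by omega
    rw [h2, pow_add, pow_mul]
    simp
  simp only [Nat.add_sub_cancel]
  rw [Nat.sub_sub_self hjn, Nat.choose_symm hjn, hsign, one_pow]
  push_cast
  ring

lemma key (n : ℕ) (i : Fin n) :
    (tvar i - 1) ^ n ∈ Ideal.map (symS n).val (IS n) := by
  have hrw : (tvar i - 1) ^ n = ∑ r ∈ Finset.range (n + 1),
      (-1 : LaurentN n) ^ r * (((n.choose r : ℤ) : LaurentN n) - esymL n r)
        * (tvar i) ^ (n - r) := by
    calc (tvar i - 1) ^ n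
        = (∑ r ∈ Finset.range (n + 1),
            (-1 : LaurentN n) ^ r * ((n.choose r : ℤ) : LaurentN n) * (tvar i) ^ (n - r))
          - ∑ r ∈ Finset.range (n + 1),
            (-1 : LaurentN n) ^ r * esymL n r * (tvar i) ^ (n - r) := by
          rw [vieta n i, sub_zero, binom n i]
      _ = _ := by
          rw [← Finset.sum_sub_distrib]
          exact Finset.sum_congr rfl fun r _ => by ring
  rw [hrw]
  refine Ideal.sum_mem _ fun r hr => ?_
  rcases Nat.eq_zero_or_pos r with rfl | hr1
  · have : ((1 : ℤ) : LaurentN n) - esymL n 0 = 0 := by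
      rw [esymL_zero]; push_cast; ring
    simp only [Nat.choose_zero_right, Nat.cast_one, this, pow_zero, one_mul, mul_zero, zero_mul]
    exact (Ideal.map (symS n).val (IS n)).zero_mem
  · have hrn : r ≤ n := by
      have := Finset.mem_range.mp hr; omega
    exact Ideal.mul_mem_right _ _ (Ideal.mul_mem_left _ _ (cmem n r hr1 hrn))

lemma mem_IT_single (n : ℕ) (a : Fin n → ℤ) :
    (AddMonoidAlgebra.single a (1 : ℤ) : LaurentN n) - 1 ∈ IT n := by
  classical
  let H : AddSubgroup (Fin n → ℤ) :=
    { carrier := {b | (AddMonoidAlgebra.single b (1 : ℤ) : LaurentN n) - 1 ∈ IT n}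
      zero_mem' := by
        show (AddMonoidAlgebra.single (0 : Fin n → ℤ) (1 : ℤ) : LaurentN n) - 1 ∈ IT n
        rw [← AddMonoidAlgebra.one_def, sub_self]
        exact (IT n).zero_mem
      add_mem' := by
        intro b c hb hc
        have hbc : (AddMonoidAlgebra.single (b + c) (1 : ℤ) : LaurentN n) - 1 =
            AddMonoidAlgebra.single b (1 : ℤ) * (AddMonoidAlgebra.single c (1 : ℤ) - 1)
              + (AddMonoidAlgebra.single b (1 : ℤ) - 1) := by
          rw [mul_sub, AddMonoidAlgebra.single_mul_single]
          simp only [mul_one]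
          ring
        rw [Set.mem_setOf_eq, hbc]
        exact add_mem (Ideal.mul_mem_left _ _ hc) hb
      neg_mem' := by
        intro b hb
        have hnb : (AddMonoidAlgebra.single (-b) (1 : ℤ) : LaurentN n) - 1 =
            -(AddMonoidAlgebra.single (-b) (1 : ℤ) * (AddMonoidAlgebra.single b (1 : ℤ) - 1)) := by
          rw [mul_sub, AddMonoidAlgebra.single_mul_single]
          simp only [mul_one, neg_add_cancel, ← AddMonoidAlgebra.one_def]
          ring
        rw [Set.mem_setOf_eq, hnb]
        exact neg_mem (Ideal.mul_mem_left _ _ hb) }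
  have hbase : ∀ i : Fin n, Pi.single i (1 : ℤ) ∈ H := fun i =>
    Ideal.subset_span ⟨i, rfl⟩
  have ha : a ∈ H := by
    have hrepr : a = ∑ i : Fin n, (a i) • Pi.single i (1 : ℤ) := by
      funext j
      simp [Finset.sum_apply, Pi.single_apply, smul_eq_mul]
    rw [hrepr]
    exact sum_mem fun i _ => AddSubgroup.zsmul_mem H (hbase i) _
  exact ha

lemma mem_IT_of_aug (n : ℕ) (x : LaurentN n) (hx : aug n x = 0) : x ∈ IT n := by
  classical
  have haug : aug n x = ∑ a ∈ x.coeff.support, x.coeff a := by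
    conv_lhs => rw [← AddMonoidAlgebra.sum_coeff_single x]
    rw [Finsupp.sum, map_sum]
    exact Finset.sum_congr rfl fun a _ => aug_single n a (x.coeff a)
  have hrepr : x = ∑ a ∈ x.coeff.support, (x.coeff a) • ((AddMonoidAlgebra.single a (1 : ℤ) : LaurentN n) - 1) := by
    have h1 : ∑ a ∈ x.coeff.support, (x.coeff a) • ((AddMonoidAlgebra.single a (1 : ℤ) : LaurentN n) - 1)
        = (∑ a ∈ x.coeff.support, (x.coeff a) • (AddMonoidAlgebra.single a (1 : ℤ) : LaurentN n))
          - ∑ a ∈ x.coeff.support, (x.coeff a) • (1 : LaurentN n) := by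
      rw [← Finset.sum_sub_distrib]
      exact Finset.sum_congr rfl fun a _ => smul_sub _ _ _
    have h2 : ∑ a ∈ x.coeff.support, (x.coeff a) • (AddMonoidAlgebra.single a (1 : ℤ) : LaurentN n) = x := by
      conv_rhs => rw [← AddMonoidAlgebra.sum_coeff_single x]
      rw [Finsupp.sum]
      refine Finset.sum_congr rfl fun a _ => ?_
      rw [AddMonoidAlgebra.smul_single', mul_one]
    have h3 : ∑ a ∈ x.coeff.support, (x.coeff a) • (1 : LaurentN n) = 0 := by
      rw [← Finset.sum_smul, ← haug, hx, zero_smul]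
    rw [h1, h2, h3, sub_zero]
  rw [hrepr]
  refine sum_mem fun a _ => ?_
  rw [zsmul_eq_mul]
  exact Ideal.mul_mem_left _ _ (mem_IT_single n a)

/-- the `I_S`-adic and `I_T`-adic topologies on `R(T)` coincide:
for every `k` there is `m` with `I_T^m ⊆ I_S^k·R(T)`, and conversely
`I_S^k·R(T) ⊆ I_T^k` for every `k`. -/
theorem stmt17 (n : ℕ) :
    (∀ k : ℕ, ∃ m : ℕ, IT n ^ m ≤ Ideal.map (symS n).val (IS n ^ k)) ∧
      ∀ k : ℕ, Ideal.map (symS n).val (IS n ^ k) ≤ IT n ^ k := by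
  constructor
  · have hrad : IT n ≤ (Ideal.map (symS n).val (IS n)).radical := by
      rw [IT, Ideal.span_le]
      rintro x ⟨i, rfl⟩
      exact Ideal.mem_radical_iff.mpr ⟨n, key n i⟩
    have hfg : (IT n).FG := Submodule.fg_span (Set.finite_range _)
    obtain ⟨m, hm⟩ := Ideal.exists_pow_le_of_le_radical_of_fg hrad hfg
    intro k
    refine ⟨m * k, ?_⟩
    rw [pow_mul]
    calc (IT n ^ m) ^ k ≤ (Ideal.map (symS n).val (IS n)) ^ k := Ideal.pow_right_mono hm k
      _ = Ideal.map (symS n).val (IS n ^ k) := (Ideal.map_pow _ _ _).symm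
  · intro k
    have hbase : Ideal.map (symS n).val (IS n) ≤ IT n := by
      rw [Ideal.map_le_iff_le_comap]
      intro x hx
      have hx' : aug n (x : LaurentN n) = 0 := hx
      exact mem_IT_of_aug n x hx'
    rw [Ideal.map_pow]
    exact Ideal.pow_right_mono hbase k


end
end

section
/- Let U_k be the set of k-tuples (A₁,...,A_k) of upper-triangular n×n matrices over a field with at least one Aᵢ invertible, and let B (the invertible upper-triangular matrices) act on U_k by simultaneous left multiplication, with action-graph map B × U_k → U_k × U_k, (A,(Aᵢ)) ↦ ((Aᵢ),(A·Aᵢ)). Then a tuple (A₁,...,A_k,B₁,...,B_k) ∈ U_k × U_k lies in the image of this map if and only if Bᵢ·adj(Aᵢ)·Aⱼ = det(Aᵢ)·Bⱼ for all i,j. -/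
/-- A matrix is upper triangular if all entries below the diagonal vanish. -/
def IsUpperTri {K : Type} [Field K] {n : ℕ} (A : Matrix (Fin n) (Fin n) K) : Prop :=
  ∀ i j : Fin n, j < i → A i j = 0

lemma isUpperTri_iff_blockTriangular {K : Type} [Field K] {n : ℕ}
    (A : Matrix (Fin n) (Fin n) K) : IsUpperTri A ↔ A.BlockTriangular id := Iff.rfl

/-- a pair of tuples `(A₁,…,A_k,B₁,…,B_k)` of upper triangular matrices,
each tuple containing an invertible member, lies in the image of the action map
`(A,(Aᵢ)) ↦ ((Aᵢ),(A·Aᵢ))` of the invertible upper triangular group iff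
`Bᵢ·adj(Aᵢ)·Aⱼ = det(Aᵢ)·Bⱼ` for all `i, j`. -/
theorem stmt18 {K : Type} [Field K] (n k : ℕ)
    (A B : Fin k → Matrix (Fin n) (Fin n) K)
    (hA : ∀ i, IsUpperTri (A i)) (hB : ∀ i, IsUpperTri (B i))
    (hAinv : ∃ i, IsUnit (A i)) (hBinv : ∃ i, IsUnit (B i)) :
    (∃ C : Matrix (Fin n) (Fin n) K, IsUpperTri C ∧ IsUnit C ∧ ∀ i, B i = C * A i) ↔
      (∀ i j, B i * (A i).adjugate * A j = (A i).det • B j) := by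
  constructor
  · rintro ⟨C, hCtri, hCunit, hC⟩ i j
    rw [hC i, hC j, Matrix.mul_assoc C, Matrix.mul_assoc C, Matrix.mul_adjugate,
      Matrix.smul_mul, Matrix.one_mul, Matrix.mul_smul]
  · intro h
    obtain ⟨i0, hi0⟩ := hAinv
    obtain ⟨i1, hi1⟩ := hBinv
    have hd : (A i0).det ≠ 0 := by
      simpa [Matrix.isUnit_iff_isUnit_det, isUnit_iff_ne_zero] using hi0
    haveI : Invertible (A i0) := (A i0).invertibleOfIsUnitDet (isUnit_iff_ne_zero.mpr hd)
    refine ⟨B i0 * (A i0)⁻¹, ?_, ?_, ?_⟩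
    · exact Matrix.BlockTriangular.mul (hB i0)
        (Matrix.blockTriangular_inv_of_blockTriangular (hA i0))
    · have key : B i0 * (A i0)⁻¹ * A i1 = B i1 := by
        rw [Matrix.inv_def, Ring.inverse_eq_inv']
        rw [Matrix.mul_smul, Matrix.smul_mul, h i0 i1,
          smul_smul, inv_mul_cancel₀ hd, one_smul]
      have : IsUnit (B i0 * (A i0)⁻¹ * A i1).det := by
        rw [key]; exact (Matrix.isUnit_iff_isUnit_det _).mp hi1
      rw [Matrix.det_mul] at this
      exact (Matrix.isUnit_iff_isUnit_det _).mpr (isUnit_of_mul_isUnit_left this)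
    · intro j
      rw [Matrix.inv_def, Ring.inverse_eq_inv',
        Matrix.mul_smul, Matrix.smul_mul, h i0 j,
        smul_smul, inv_mul_cancel₀ hd, one_smul]
end
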